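/- Let Λ, γ, C > 0, n ≥ 3, and f(t) = (C·A)/(2(n-1))·(Λ·e^{1.25·A·t} + t² + γ). If K(A) denotes the smallest nonnegative fixed point of f (when it exists), then K(A) = O(A) as A → 0; more precisely, there exist constants M, A₀ > 0 such that for all 0 < A ≤ A₀, f has a smallest fixed point K(A) and K(A) ≤ M·A. -/

import Mathlib

/-- The smallest nonnegative fixed point K(A) of
`f t = (C·A)/(2(n-1))·(Λ·exp(1.25·A·t) + t² + γ)` exists for all small A > 0
and satisfies K(A) ≤ M·A, i.e. K(A) = O(A) as A → 0. -/
theorem stmt1 (Λ γ C : ℝ) (hΛ : 0 < Λ) (hγ : 0 < γ) (hC : 0 < C)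
    (n : ℕ) (hn : 3 ≤ n) :
    ∃ M > 0, ∃ A₀ > 0, ∀ A : ℝ, 0 < A → A ≤ A₀ →
      ∃ K : ℝ, 0 ≤ K ∧
        (C * A) / (2 * ((n : ℝ) - 1)) * (Λ * Real.exp (1.25 * A * K) + K ^ 2 + γ) = K ∧
        (∀ t : ℝ, 0 ≤ t →
          (C * A) / (2 * ((n : ℝ) - 1)) * (Λ * Real.exp (1.25 * A * t) + t ^ 2 + γ) = t →
          K ≤ t) ∧
        K ≤ M * A := by
  have hn1 : (0:ℝ) < (n:ℝ) - 1 := by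
    have : (3:ℝ) ≤ (n:ℝ) := by exact_mod_cast hn
    linarith
  set c : ℝ := C / (2 * ((n : ℝ) - 1)) with hc_def
  have hc : 0 < c := div_pos hC (by linarith)
  set M : ℝ := c * (Real.exp 1 * Λ + 1 + γ) with hM_def
  have hM : 0 < M := by
    have := Real.exp_pos 1
    positivity
  refine ⟨M, hM, min 1 (1 / (2 * M)), lt_min one_pos (by positivity), ?_⟩
  intro A hA hA₀
  have hA1 : A ≤ 1 := le_trans hA₀ (min_le_left _ _)
  have hMA : M * A ≤ 1 / 2 := by
    have h2 : A ≤ 1 / (2 * M) := le_trans hA₀ (min_le_right _ _)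
    have := mul_le_mul_of_nonneg_left h2 hM.le
    calc M * A ≤ M * (1 / (2 * M)) := this
      _ = 1 / 2 := by field_simp
  set f : ℝ → ℝ := fun t => C * A / (2 * ((n : ℝ) - 1)) * (Λ * Real.exp (1.25 * A * t) + t ^ 2 + γ) with hf_def
  have hca : C * A / (2 * ((n : ℝ) - 1)) = c * A := by rw [hc_def]; ring
  have hfcont : Continuous f := by fun_prop
  -- f (M*A) ≤ M*A
  have key : f (M * A) ≤ M * A := by
    have hexp : Real.exp (1.25 * A * (M * A)) ≤ Real.exp 1 := by
      apply Real.exp_le_exp.mpr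
      nlinarith [hA.le, hM.le]
    have hsq : (M * A) ^ 2 ≤ 1 := by nlinarith [hMA, mul_nonneg hM.le hA.le]
    have : f (M * A) ≤ c * A * (Λ * Real.exp 1 + 1 + γ) := by
      simp only [hf_def, hca]
      have h1 := mul_le_mul_of_nonneg_left hexp hΛ.le
      have hca2 : (0:ℝ) ≤ c * A := by positivity
      nlinarith
    calc f (M * A) ≤ c * A * (Λ * Real.exp 1 + 1 + γ) := this
      _ = M * A := by ring
  -- f 0 > 0
  have hf0 : 0 < f 0 := by
    simp only [hf_def]
    positivity
  -- IVT: exists x ∈ [0, M*A] with f x = x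
  have hMA0 : (0:ℝ) ≤ M * A := by positivity
  obtain ⟨x, hxmem, hxeq⟩ : ∃ x ∈ Set.Icc (0:ℝ) (M * A), f x - x = 0 := by
    have h := intermediate_value_Icc' hMA0
      ((hfcont.sub continuous_id).continuousOn : ContinuousOn (fun t => f t - t) _)
    have h0 : (0:ℝ) ∈ Set.Icc (f (M * A) - M * A) (f 0 - 0) := by
      constructor <;> simp <;> linarith
    obtain ⟨x, hx, hx0⟩ := h h0
    exact ⟨x, hx, hx0⟩
  set S : Set ℝ := {t : ℝ | 0 ≤ t ∧ f t = t} with hS_def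
  have hxS : x ∈ S := ⟨hxmem.1, by linarith⟩
  have hSne : S.Nonempty := ⟨x, hxS⟩
  have hSbdd : BddBelow S := ⟨0, fun t ht => ht.1⟩
  have hSclosed : IsClosed S := by
    have : S = {t : ℝ | 0 ≤ t} ∩ (fun t => f t - t) ⁻¹' {0} := by
      ext t; simp [hS_def, sub_eq_zero]
    rw [this]
    exact (isClosed_Ici).inter (isClosed_singleton.preimage (hfcont.sub continuous_id))
  have hKmem : sInf S ∈ S := hSclosed.csInf_mem hSne hSbdd
  refine ⟨sInf S, hKmem.1, hKmem.2, ?_, ?_⟩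
  · intro t ht hteq
    exact csInf_le hSbdd ⟨ht, hteq⟩
  · exact le_trans (csInf_le hSbdd hxS) hxmem.2
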